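/- (Crapo–Rota) Let q be a prime power and let 𝒜 = {H₁, …, Hₙ} be an arrangement of affine hyperplanes in V = 𝔽_q^ℓ. Then the number of points of the complement satisfies #(𝔽_q^ℓ ∖ (H₁ ∪ ⋯ ∪ Hₙ)) = χ(𝒜, q). -/
import Mathlib


/-- A subset of a vector space is an affine hyperplane if it is the level set of a
nonzero linear form. -/
def IsAffineHyperplane (𝕂 : Type*) {V : Type*} [Field 𝕂] [AddCommGroup V] [Module 𝕂 V]
    (S : Set V) : Prop :=
  ∃ (α : V →ₗ[𝕂] 𝕂) (b : 𝕂), α ≠ 0 ∧ S = {x | α x = b}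

open Classical in
/-- The intersection poset of an arrangement `H` inside the ambient space `W`:
the collection of all nonempty intersections `W ∩ ⋂ i ∈ I, H i` (for `I = ∅` this is `W`). -/
noncomputable def interPoset {V : Type*} {ι : Type*} [Fintype ι] (W : Set V) (H : ι → Set V) :
    Finset (Set V) :=
  ((Finset.univ : Finset (Finset ι)).image fun I => W ∩ ⋂ i ∈ I, H i).filter fun X => X.Nonempty

open Classical in
/-- The Möbius function of the intersection poset `L`, ordered by reverse inclusion,
with minimal element `W`:  `μ W = 1` and `μ X = - ∑_{Z < X} μ Z`, where `Z < X` means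
`Z ⊋ X` (as sets). -/
noncomputable def mobiusIn {V : Type*} (L : Finset (Set V)) (W : Set V) (X : Set V) : ℤ :=
  if X = W then 1
  else - ∑ Z ∈ (L.filter fun Z => X ⊂ Z).attach,
    mobiusIn L W Z.1
termination_by (L.filter fun Z => X ⊂ Z).card
decreasing_by
  have hZ : Z.1 ∈ L.filter fun Y => X ⊂ Y := Z.2
  rw [Finset.mem_filter] at hZ
  apply Finset.card_lt_card
  rw [Finset.ssubset_iff_of_subset]
  · refine ⟨Z.1, Finset.mem_filter.mpr ⟨hZ.1, hZ.2⟩, ?_⟩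
    intro hmem
    exact (lt_irrefl _ (Finset.mem_filter.mp hmem).2)
  · intro Y hY
    rw [Finset.mem_filter] at hY ⊢
    exact ⟨hY.1, hZ.2.trans hY.2⟩

/-- The dimension of a subset of a vector space, as the dimension of its affine span. -/
noncomputable def affDim (𝕂 : Type*) {V : Type*} [Field 𝕂] [AddCommGroup V] [Module 𝕂 V]
    (X : Set V) : ℕ :=
  Module.finrank 𝕂 (affineSpan 𝕂 X).direction

/-- The characteristic polynomial `χ(𝒜, t) = ∑_{X ∈ L(𝒜)} μ(X) t^{dim X}` of the
arrangement `H` in the ambient affine space `W`. -/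
noncomputable def charPoly (𝕂 : Type*) {V : Type*} [Field 𝕂] [AddCommGroup V] [Module 𝕂 V]
    {ι : Type*} [Fintype ι] (W : Set V) (H : ι → Set V) : Polynomial ℤ :=
  ∑ X ∈ interPoset W H,
    Polynomial.C (mobiusIn (interPoset W H) W X) * Polynomial.X ^ affDim 𝕂 X

open Finset

lemma mem_interPoset_iff {V ι : Type*} [Fintype ι] {W : Set V} {H : ι → Set V} {X : Set V} :
    X ∈ interPoset W H ↔ (∃ I : Finset ι, W ∩ ⋂ i ∈ I, H i = X) ∧ X.Nonempty := by
  classical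
  simp [interPoset]

open Classical in
lemma mobius_sum {V : Type*} {n : ℕ} (H : Fin n → Set V)
    (hne : ∀ i, H i ≠ Set.univ) (x : V) :
    ∑ X ∈ (interPoset Set.univ H).filter (fun X => x ∈ X),
        mobiusIn (interPoset Set.univ H) Set.univ X
      = if x ∈ ⋃ i, H i then 0 else 1 := by
  classical
  set L := interPoset (Set.univ : Set V) H with hLdef
  set m : Set V := Set.univ ∩ ⋂ i ∈ Finset.univ.filter (fun i => x ∈ H i), H i with hmdef
  have hxm : x ∈ m := by
    simp only [hmdef, Set.mem_inter_iff, Set.mem_univ, true_and, Set.mem_iInter]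
    intro i hi
    exact (Finset.mem_filter.mp hi).2
  have hmL : m ∈ L := mem_interPoset_iff.mpr ⟨⟨_, rfl⟩, ⟨x, hxm⟩⟩
  have hsub : ∀ X ∈ L, x ∈ X → m ⊆ X := by
    intro X hX hxX
    obtain ⟨⟨I, hI⟩, -⟩ := mem_interPoset_iff.mp hX
    intro y hy
    rw [← hI] at hxX ⊢
    refine ⟨trivial, Set.mem_iInter₂.mpr fun i hi => ?_⟩
    have hxi : x ∈ H i := Set.mem_iInter₂.mp hxX.2 i hi
    exact Set.mem_iInter₂.mp hy.2 i (Finset.mem_filter.mpr ⟨Finset.mem_univ i, hxi⟩)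
  by_cases hx : x ∈ ⋃ i, H i
  · simp only [hx, if_true]
    obtain ⟨i, hi⟩ := Set.mem_iUnion.mp hx
    have hmHi : m ⊆ H i := fun y hy =>
      Set.mem_iInter₂.mp hy.2 i (Finset.mem_filter.mpr ⟨Finset.mem_univ i, hi⟩)
    have hmne : m ≠ Set.univ := by
      intro h
      exact hne i (Set.eq_univ_of_univ_subset (h ▸ hmHi))
    have hfilter : L.filter (fun X => x ∈ X) = insert m (L.filter (fun Z => m ⊂ Z)) := by
      ext X
      simp only [Finset.mem_filter, Finset.mem_insert]
      constructor
      · rintro ⟨hXL, hxX⟩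
        rcases (hsub X hXL hxX).ssubset_or_eq with h | h
        · exact Or.inr ⟨hXL, h⟩
        · exact Or.inl h.symm
      · rintro (rfl | ⟨hXL, hmX⟩)
        · exact ⟨hmL, hxm⟩
        · exact ⟨hXL, hmX.subset hxm⟩
    rw [hfilter, Finset.sum_insert (fun h => (Finset.mem_filter.mp h).2.ne rfl)]
    have hmv : mobiusIn L Set.univ m
        = - ∑ Z ∈ L.filter (fun Z => m ⊂ Z), mobiusIn L Set.univ Z := by
      rw [mobiusIn, if_neg hmne]
      congr 1
      exact Finset.sum_attach _ _
    rw [hmv]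
    ring
  · simp only [hx, if_false]
    have hIe : Finset.univ.filter (fun i => x ∈ H i) = ∅ := by
      ext i
      simp only [Finset.mem_filter, Finset.mem_univ, true_and, Finset.notMem_empty, iff_false]
      exact fun h => hx (Set.mem_iUnion.mpr ⟨i, h⟩)
    have hm : m = Set.univ := by
      rw [hmdef, hIe]
      simp
    have hfilter : L.filter (fun X => x ∈ X) = {Set.univ} := by
      ext X
      simp only [Finset.mem_filter, Finset.mem_singleton]
      constructor
      · rintro ⟨hXL, hxX⟩
        have := hsub X hXL hxX
        rw [hm] at this
        exact Set.univ_subset_iff.mp this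
      · rintro rfl
        exact ⟨hm ▸ hmL, trivial⟩
    rw [hfilter, Finset.sum_singleton, mobiusIn, if_pos rfl]
open Finset Module

lemma coset_card_dim {𝕂 V : Type*} [Field 𝕂] [Fintype 𝕂] [AddCommGroup V] [Module 𝕂 V]
    [Fintype V] (K : Submodule 𝕂 V) (x0 : V) (X : Set V) (hX : X = {x | x - x0 ∈ K}) :
    (Nat.card X : ℤ) = (Fintype.card 𝕂 : ℤ) ^ affDim 𝕂 X := by
  classical
  have hXc : X = ↑(AffineSubspace.mk' x0 K) := by
    ext x
    simp [hX, AffineSubspace.mem_mk', vsub_eq_sub]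
  have hspan : affineSpan 𝕂 X = AffineSubspace.mk' x0 K := by
    rw [hXc]; exact AffineSubspace.affineSpan_coe _
  have hdim : affDim 𝕂 X = finrank 𝕂 K := by
    rw [affDim, hspan, AffineSubspace.direction_mk']
  have hcard : Nat.card X = Nat.card K := by
    apply Nat.card_congr
    refine ⟨fun x => ⟨x.1 - x0, by simpa [hX] using x.2⟩,
      fun v => ⟨x0 + v.1, by simp [hX]⟩, ?_, ?_⟩
    · intro x; ext; simp
    · intro v; ext; simp
  haveI : Fintype K := Fintype.ofFinite _
  rw [hcard, hdim, Nat.card_eq_fintype_card, card_eq_pow_finrank (K := 𝕂)]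
  push_cast
  ring

/-- **Crapo–Rota's theorem.** Let `𝕂 = 𝔽_q` be a finite field (so `q` is a prime
power) and `𝒜 = {H 1, …, H n}` an arrangement of affine hyperplanes in `𝔽_q^ℓ`.
Then the number of points of the complement equals `χ(𝒜, q)`. -/
theorem card_complement_eq_charPoly_eval {𝕂 : Type*} [Field 𝕂] [Fintype 𝕂] {ℓ n : ℕ}
    (H : Fin n → Set (Fin ℓ → 𝕂))
    (hH : ∀ i, IsAffineHyperplane 𝕂 (H i))
    (hinj : Function.Injective H) :
    (Nat.card ((⋃ i, H i)ᶜ : Set (Fin ℓ → 𝕂)) : ℤ)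
      = (charPoly 𝕂 Set.univ H).eval (Fintype.card 𝕂 : ℤ) := by
  classical
  choose α b hα0 hαH using hH
  set L := interPoset (Set.univ : Set (Fin ℓ → 𝕂)) H with hLdef
  have hne : ∀ i, H i ≠ Set.univ := by
    intro i h
    obtain ⟨v, hv⟩ : ∃ v, α i v ≠ 0 := by
      by_contra hc
      push_neg at hc
      exact hα0 i (LinearMap.ext fun v => hc v)
    have h0 : (0 : Fin ℓ → 𝕂) ∈ H i := h ▸ Set.mem_univ _
    have hvv : v ∈ H i := h ▸ Set.mem_univ _
    rw [hαH i] at h0 hvv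
    simp only [Set.mem_setOf_eq, map_zero] at h0 hvv
    exact hv (hvv.trans h0.symm)
  -- cardinality of each element of the poset
  have hcard : ∀ X ∈ L, (Nat.card X : ℤ) = (Fintype.card 𝕂 : ℤ) ^ affDim 𝕂 X := by
    intro X hX
    obtain ⟨⟨I, hI⟩, hXne⟩ := mem_interPoset_iff.mp hX
    obtain ⟨x0, hx0⟩ := hXne
    refine coset_card_dim (⨅ i ∈ I, LinearMap.ker (α i)) x0 X ?_
    have hx0' : ∀ i ∈ I, α i x0 = b i := by
      rw [← hI] at hx0
      intro i hi
      have := Set.mem_iInter₂.mp hx0.2 i hi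
      rwa [hαH i] at this
    ext x
    rw [← hI]
    simp only [Set.mem_inter_iff, Set.mem_univ, true_and, Set.mem_iInter, Set.mem_setOf_eq,
      Submodule.mem_iInf, LinearMap.mem_ker, map_sub, hαH]
    constructor
    · intro h i hi
      rw [h i hi, hx0' i hi, sub_self]
    · intro h i hi
      have := h i hi
      rw [hx0' i hi, sub_eq_zero] at this
      exact this
  -- evaluate the characteristic polynomial
  rw [charPoly, Polynomial.eval_finset_sum]
  simp only [Polynomial.eval_mul, Polynomial.eval_C, Polynomial.eval_pow, Polynomial.eval_X]
  have step1 : ∑ X ∈ L, mobiusIn L Set.univ X * (Fintype.card 𝕂 : ℤ) ^ affDim 𝕂 X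
      = ∑ X ∈ L, mobiusIn L Set.univ X * (Nat.card X : ℤ) := by
    refine Finset.sum_congr rfl fun X hX => ?_
    rw [hcard X hX]
  have hcnt : ∀ X : Set (Fin ℓ → 𝕂), (Nat.card X : ℤ) = ∑ x : (Fin ℓ → 𝕂), if x ∈ X then (1 : ℤ) else 0 := by
    intro X
    rw [Finset.sum_boole, Nat.card_eq_fintype_card, ← Set.toFinset_card,
      ← Set.filter_mem_univ_eq_toFinset]
  have step2 : ∑ X ∈ L, mobiusIn L Set.univ X * (Nat.card X : ℤ)
      = ∑ x : (Fin ℓ → 𝕂), if x ∈ ⋃ i, H i then 0 else 1 := by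
    calc ∑ X ∈ L, mobiusIn L Set.univ X * (Nat.card X : ℤ)
        = ∑ X ∈ L, ∑ x : (Fin ℓ → 𝕂), if x ∈ X then mobiusIn L Set.univ X else 0 := by
          refine Finset.sum_congr rfl fun X hX => ?_
          rw [hcnt X, Finset.mul_sum]
          exact Finset.sum_congr rfl fun x _ => by split <;> simp
      _ = ∑ x : (Fin ℓ → 𝕂), ∑ X ∈ L, if x ∈ X then mobiusIn L Set.univ X else 0 := Finset.sum_comm
      _ = ∑ x : (Fin ℓ → 𝕂), ∑ X ∈ L.filter (fun X => x ∈ X), mobiusIn L Set.univ X := by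
          refine Finset.sum_congr rfl fun x _ => ?_
          rw [Finset.sum_filter]
      _ = ∑ x : (Fin ℓ → 𝕂), if x ∈ ⋃ i, H i then 0 else 1 :=
          Finset.sum_congr rfl fun x _ => mobius_sum H hne x
  rw [step1, step2]
  have : (Nat.card ((⋃ i, H i)ᶜ : Set (Fin ℓ → 𝕂)) : ℤ)
      = ∑ x : (Fin ℓ → 𝕂), if x ∈ ⋃ i, H i then 0 else 1 := by
    rw [hcnt]
    refine Finset.sum_congr rfl fun x _ => ?_
    by_cases h : ∃ i, x ∈ H i <;> simp [Set.mem_compl_iff, Set.mem_iUnion, h]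
  rw [this]
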